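/- (First Rule of Quadrilaterals) Let n ≥ 4 and let A and B be the z-matrix and w-matrix of a singular sequence. Then for all pairwise distinct indices i, j, k, l in {1,…,n}, a_{ij} + a_{ik} + a_{il} + a_{jk} + a_{jl} + a_{kl} ≠ 5. The same statement holds with A replaced by B. -/

import Mathlib

open Filter Finset

/-- `Zq δ z k l` is the quantity `Z_{lk} = δ_{kl}^3 · (z_k − z_l)`
(and, applied to `w`, the quantity `W_{lk}`). -/
noncomputable def Zq {n : ℕ} (δ : Fin n → Fin n → ℂ) (z : Fin n → ℂ) (k l : Fin n) : ℂ :=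
  δ k l ^ 3 * (z k - z l)

/-- A singular sequence of normalized central configurations for the masses `m`:
sequences `z^{(N)}, w^{(N)} ∈ ℂ^n`, symmetric `δ^{(N)}`, and positive reals `ε_N → 0`
such that every term satisfies the central configuration equations
`z_k = ∑_{l≠k} m_l Z_{lk}`, `w_k = ∑_{l≠k} m_l W_{lk}`, the normalization
`δ_{kl}^2 z_{kl} w_{kl} = 1` (`k ≠ l`), the maximum of the `|z_k|, |Z_{kl}|`
(resp. `|w_k|, |W_{kl}|`) equals `ε_N^{-2}`, and all the sequences
`ε_N^2 z_k, ε_N^2 w_k, ε_N^2 Z_{kl}, ε_N^2 W_{kl}` converge. -/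
structure SingularSeq (n : ℕ) (m : Fin n → ℂ) : Type where
  z : ℕ → Fin n → ℂ
  w : ℕ → Fin n → ℂ
  delta : ℕ → Fin n → Fin n → ℂ
  eps : ℕ → ℝ
  eps_pos : ∀ N, 0 < eps N
  eps_lim : Tendsto eps atTop (nhds 0)
  delta_symm : ∀ N, ∀ k l : Fin n, delta N k l = delta N l k
  eq_z : ∀ N, ∀ k : Fin n, z N k = ∑ l ∈ univ.erase k, m l * Zq (delta N) (z N) k l
  eq_w : ∀ N, ∀ k : Fin n, w N k = ∑ l ∈ univ.erase k, m l * Zq (delta N) (w N) k l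
  normalize : ∀ N, ∀ k l : Fin n, k ≠ l →
    delta N k l ^ 2 * (z N l - z N k) * (w N l - w N k) = 1
  maxZ : ∀ N, IsGreatest
      ({x : ℝ | ∃ k, x = ‖z N k‖} ∪
        {x : ℝ | ∃ k l, k ≠ l ∧ x = ‖Zq (delta N) (z N) k l‖})
      (eps N ^ (-2 : ℤ))
  maxW : ∀ N, IsGreatest
      ({x : ℝ | ∃ k, x = ‖w N k‖} ∪
        {x : ℝ | ∃ k l, k ≠ l ∧ x = ‖Zq (delta N) (w N) k l‖})
      (eps N ^ (-2 : ℤ))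
  conv_z : ∀ k : Fin n, ∃ L : ℂ,
    Tendsto (fun N => (eps N : ℂ) ^ 2 * z N k) atTop (nhds L)
  conv_w : ∀ k : Fin n, ∃ L : ℂ,
    Tendsto (fun N => (eps N : ℂ) ^ 2 * w N k) atTop (nhds L)
  conv_Z : ∀ k l : Fin n, k ≠ l → ∃ L : ℂ,
    Tendsto (fun N => (eps N : ℂ) ^ 2 * Zq (delta N) (z N) k l) atTop (nhds L)
  conv_W : ∀ k l : Fin n, k ≠ l → ∃ L : ℂ,
    Tendsto (fun N => (eps N : ℂ) ^ 2 * Zq (delta N) (w N) k l) atTop (nhds L)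

/-- `A` and `B` are the z-matrix and the w-matrix of the singular sequence `S`:
symmetric `{0,1}`-matrices whose entries record which of the (convergent) sequences
`ε_N^2 z_i`, `ε_N^2 Z_{ij}` (resp. `ε_N^2 w_i`, `ε_N^2 W_{ij}`) have nonzero limit. -/
structure IsZWMatrices {n : ℕ} {m : Fin n → ℂ} (S : SingularSeq n m)
    (A B : Matrix (Fin n) (Fin n) ℕ) : Prop where
  zeroOne_A : ∀ i j, A i j = 0 ∨ A i j = 1
  symm_A : ∀ i j, A i j = A j i
  zeroOne_B : ∀ i j, B i j = 0 ∨ B i j = 1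
  symm_B : ∀ i j, B i j = B j i
  diag_A : ∀ i, A i i = 1 ↔
    ¬ Tendsto (fun N => (S.eps N : ℂ) ^ 2 * S.z N i) atTop (nhds 0)
  off_A : ∀ i j, i ≠ j → (A i j = 1 ↔
    ¬ Tendsto (fun N => (S.eps N : ℂ) ^ 2 * Zq (S.delta N) (S.z N) i j) atTop (nhds 0))
  diag_B : ∀ i, B i i = 1 ↔
    ¬ Tendsto (fun N => (S.eps N : ℂ) ^ 2 * S.w N i) atTop (nhds 0)
  off_B : ∀ i j, i ≠ j → (B i j = 1 ↔
    ¬ Tendsto (fun N => (S.eps N : ℂ) ^ 2 * Zq (S.delta N) (S.w N) i j) atTop (nhds 0))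


/-!
For a pair `a ≠ b` put `X = |z_a - z_b|`, `Y = |w_a - w_b|` and `G = ε² |Z_{ab}|`. The
normalization gives `X Y³ G² = ε⁴`, and `G ≤ 1` by the choice of `ε`; hence `X Y³ ≥ ε⁴` for
every pair, and `X Y³ ≍ ε⁴` for every pair with `a_{ab} = 1`. If `ij, ik, il, jk, jl` all have
entry `1`, the triangle inequalities for `z` and `w` in the triangles `ijk` and `ijl` give
`X_ik ≍ X_ij ≍ X_il`, and then the triangle `ikl` gives `X_kl Y_kl³ ≲ ε⁴`. So `G_kl` stays away
from `0` and `a_{kl} = 1` too. The `w`-matrix is the `z`-matrix of the sequence with `z` and `w`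
exchanged.
-/

open Topology

theorem Filter.exists_pos_eventually_forall_mem_le {ι α : Type*} {l : Filter α} (s : Finset ι)
    {u : ι → α → ℝ} (h : ∀ p ∈ s, ∃ g > 0, ∀ᶠ a in l, g ≤ u p a) :
    ∃ g > 0, ∀ᶠ a in l, ∀ p ∈ s, g ≤ u p a := by
  classical
  induction s using Finset.induction_on with
  | empty => exact ⟨1, one_pos, by simp⟩
  | insert p s _ ih =>
    obtain ⟨g₁, hg₁, h₁⟩ := h p (mem_insert_self p s)
    obtain ⟨g₂, hg₂, h₂⟩ := ih fun q hq => h q (mem_insert_of_mem hq)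
    refine ⟨min g₁ g₂, lt_min hg₁ hg₂, (h₁.and h₂).mono fun a ha q hq => ?_⟩
    rcases mem_insert.1 hq with rfl | hq
    · exact (min_le_left _ _).trans ha.1
    · exact (min_le_right _ _).trans (ha.2 q hq)

section MixedProd

variable {ι E F : Type*} [SeminormedAddCommGroup E] [SeminormedAddCommGroup F]
  (x : ι → E) (y : ι → F)

def mixedProd (a b : ι) : ℝ := ‖x a - x b‖ * ‖y a - y b‖ ^ 3

theorem mixedProd_nonneg (a b : ι) : 0 ≤ mixedProd x y a b := by
  unfold mixedProd; positivity

theorem mixedProd_comm (a b : ι) : mixedProd x y a b = mixedProd x y b a := by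
  simp only [mixedProd, norm_sub_rev (x a), norm_sub_rev (y a)]

theorem norm_sub_pow_three_le (a b c : ι) :
    ‖y a - y b‖ ^ 3 ≤ 4 * (‖y a - y c‖ ^ 3 + ‖y c - y b‖ ^ 3) :=
  calc ‖y a - y b‖ ^ 3 ≤ (‖y a - y c‖ + ‖y c - y b‖) ^ 3 := by
        gcongr; exact norm_sub_le_norm_sub_add_norm_sub _ _ _
    _ ≤ 2 ^ (3 - 1) * (‖y a - y c‖ ^ 3 + ‖y c - y b‖ ^ 3) :=
        add_pow_le (norm_nonneg _) (norm_nonneg _) 3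
    _ = 4 * (‖y a - y c‖ ^ 3 + ‖y c - y b‖ ^ 3) := by norm_num

variable {x y}

/-- Since `X_ij Y_ij³ ≥ e`, one of `Y_ik`, `Y_jk` is large, so the smaller of `X_ik`, `X_jk` is
`≲ X_ij`; the triangle inequality for `x` then bounds `X_ik`. -/
theorem norm_sub_le_of_mixedProd_le {e K : ℝ} {i j k : ι} (he : 0 < e)
    (hij : e ≤ mixedProd x y i j) (hik : mixedProd x y i k ≤ K * e)
    (hjk : mixedProd x y j k ≤ K * e) :
    ‖x i - x k‖ ≤ (1 + 8 * K) * ‖x i - x j‖ := by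
  set μ := min ‖x i - x k‖ ‖x j - x k‖
  have hμe : μ * e ≤ 8 * K * ‖x i - x j‖ * e :=
    calc μ * e ≤ μ * mixedProd x y i j := by gcongr
      _ ≤ μ * (‖x i - x j‖ * (4 * (‖y i - y k‖ ^ 3 + ‖y k - y j‖ ^ 3))) := by
          unfold mixedProd; gcongr; exact norm_sub_pow_three_le y i j k
      _ = 4 * ‖x i - x j‖ * (μ * ‖y i - y k‖ ^ 3 + μ * ‖y j - y k‖ ^ 3) := by
          rw [norm_sub_rev (y k)]; ring
      _ ≤ 4 * ‖x i - x j‖ * (K * e + K * e) := by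
          gcongr _ * (?_ + ?_)
          · exact (mul_le_mul_of_nonneg_right (min_le_left _ _) (by positivity)).trans hik
          · exact (mul_le_mul_of_nonneg_right (min_le_right _ _) (by positivity)).trans hjk
      _ = 8 * K * ‖x i - x j‖ * e := by ring
  have hμ : μ ≤ 8 * K * ‖x i - x j‖ := le_of_mul_le_mul_right hμe he
  have hik_le : ‖x i - x k‖ - ‖x i - x j‖ ≤ μ :=
    le_min (by linarith [norm_nonneg (x i - x j)])
      (by linarith [norm_sub_le_norm_sub_add_norm_sub (x i) (x j) (x k)])
  linarith

theorem mixedProd_le_of_quadrilateral {e K : ℝ} {i j k l : ι} (he : 0 < e)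
    (lij : e ≤ mixedProd x y i j) (lik : e ≤ mixedProd x y i k) (lil : e ≤ mixedProd x y i l)
    (uij : mixedProd x y i j ≤ K * e) (uik : mixedProd x y i k ≤ K * e)
    (uil : mixedProd x y i l ≤ K * e) (ujk : mixedProd x y j k ≤ K * e)
    (ujl : mixedProd x y j l ≤ K * e) :
    mixedProd x y k l ≤ 8 * (1 + (1 + 8 * K) ^ 2) * K * e := by
  have hK : 0 ≤ 1 + 8 * K := by nlinarith
  have ukj := mixedProd_comm x y j k ▸ ujk
  have ulj := mixedProd_comm x y j l ▸ ujl
  have hkl : ‖x i - x k‖ ≤ (1 + 8 * K) ^ 2 * ‖x i - x l‖ :=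
    calc ‖x i - x k‖ ≤ (1 + 8 * K) * ‖x i - x j‖ := norm_sub_le_of_mixedProd_le he lij uik ujk
      _ ≤ (1 + 8 * K) * ((1 + 8 * K) * ‖x i - x l‖) := by
          gcongr; exact norm_sub_le_of_mixedProd_le he lil uij ulj
      _ = (1 + 8 * K) ^ 2 * ‖x i - x l‖ := by ring
  have hlk : ‖x i - x l‖ ≤ (1 + 8 * K) ^ 2 * ‖x i - x k‖ :=
    calc ‖x i - x l‖ ≤ (1 + 8 * K) * ‖x i - x j‖ := norm_sub_le_of_mixedProd_le he lij uil ujl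
      _ ≤ (1 + 8 * K) * ((1 + 8 * K) * ‖x i - x k‖) := by
          gcongr; exact norm_sub_le_of_mixedProd_le he lik uij ukj
      _ = (1 + 8 * K) ^ 2 * ‖x i - x k‖ := by ring
  calc mixedProd x y k l
      ≤ (‖x i - x k‖ + ‖x i - x l‖) * (4 * (‖y i - y k‖ ^ 3 + ‖y i - y l‖ ^ 3)) := by
        unfold mixedProd
        gcongr
        · rw [norm_sub_rev (x i)]; exact norm_sub_le_norm_sub_add_norm_sub _ _ _
        · rw [norm_sub_rev (y i)]; exact norm_sub_pow_three_le y k l i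
    _ = 4 * (mixedProd x y i k + mixedProd x y i l + ‖x i - x k‖ * ‖y i - y l‖ ^ 3
          + ‖x i - x l‖ * ‖y i - y k‖ ^ 3) := by unfold mixedProd; ring
    _ ≤ 4 * (K * e + K * e + (1 + 8 * K) ^ 2 * (K * e) + (1 + 8 * K) ^ 2 * (K * e)) := by
        gcongr _ * (?_ + ?_ + ?_ + ?_)
        · exact (mul_le_mul_of_nonneg_right hkl (by positivity)).trans
            (by rw [mul_assoc]; exact mul_le_mul_of_nonneg_left uil (sq_nonneg _))
        · exact (mul_le_mul_of_nonneg_right hlk (by positivity)).trans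
            (by rw [mul_assoc]; exact mul_le_mul_of_nonneg_left uik (sq_nonneg _))
    _ = 8 * (1 + (1 + 8 * K) ^ 2) * K * e := by ring

end MixedProd

namespace SingularSeq

variable {n : ℕ} {m : Fin n → ℂ} (S : SingularSeq n m)

noncomputable def scaledZ (a b : Fin n) (N : ℕ) : ℂ :=
  (S.eps N : ℂ) ^ 2 * Zq (S.delta N) (S.z N) a b

theorem mixedProd_mul_norm_scaledZ_sq (N : ℕ) {a b : Fin n} (hab : a ≠ b) :
    mixedProd (S.z N) (S.w N) a b * ‖S.scaledZ a b N‖ ^ 2 = S.eps N ^ 4 := by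
  have hZ :
      Zq (S.delta N) (S.z N) a b ^ 2 * ((S.z N a - S.z N b) * (S.w N a - S.w N b) ^ 3) = 1 := by
    unfold Zq
    set u := S.delta N a b ^ 2 * (S.z N b - S.z N a) * (S.w N b - S.w N a)
    linear_combination (u ^ 2 + u + 1) * S.normalize N a b hab
  have hnorm := congrArg norm hZ
  simp only [norm_mul, norm_pow, norm_one] at hnorm
  simp only [mixedProd, scaledZ, norm_mul, norm_pow, Complex.norm_real, Real.norm_eq_abs,
    abs_of_pos (S.eps_pos N)]
  linear_combination S.eps N ^ 4 * hnorm

theorem norm_scaledZ_le_one (N : ℕ) {a b : Fin n} (hab : a ≠ b) : ‖S.scaledZ a b N‖ ≤ 1 := by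
  have hmax : ‖Zq (S.delta N) (S.z N) a b‖ ≤ S.eps N ^ (-2 : ℤ) :=
    (S.maxZ N).2 (Or.inr ⟨a, b, hab, rfl⟩)
  have hε := S.eps_pos N
  rw [zpow_neg, zpow_ofNat] at hmax
  rw [scaledZ, norm_mul, norm_pow, Complex.norm_real, Real.norm_eq_abs, abs_of_pos hε]
  calc S.eps N ^ 2 * ‖Zq (S.delta N) (S.z N) a b‖ ≤ S.eps N ^ 2 * (S.eps N ^ 2)⁻¹ := by gcongr
    _ = 1 := mul_inv_cancel₀ (by positivity)

theorem eps_pow_four_le_mixedProd (N : ℕ) {a b : Fin n} (hab : a ≠ b) :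
    S.eps N ^ 4 ≤ mixedProd (S.z N) (S.w N) a b := by
  rw [← S.mixedProd_mul_norm_scaledZ_sq N hab]
  exact mul_le_of_le_one_right (mixedProd_nonneg _ _ a b)
    (pow_le_one₀ (norm_nonneg _) (S.norm_scaledZ_le_one N hab))

theorem mixedProd_le_of_le_norm_scaledZ (N : ℕ) {a b : Fin n} (hab : a ≠ b) {g : ℝ} (hg : 0 < g)
    (hgZ : g ≤ ‖S.scaledZ a b N‖) :
    mixedProd (S.z N) (S.w N) a b ≤ (g ^ 2)⁻¹ * S.eps N ^ 4 := by
  rw [← S.mixedProd_mul_norm_scaledZ_sq N hab, le_inv_mul_iff₀ (by positivity), mul_comm]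
  have := mixedProd_nonneg (S.z N) (S.w N) a b
  gcongr

theorem exists_pos_eventually_le_norm_scaledZ {a b : Fin n} (hab : a ≠ b)
    (h : ¬Tendsto (S.scaledZ a b) atTop (𝓝 0)) :
    ∃ g > 0, ∀ᶠ N in atTop, g ≤ ‖S.scaledZ a b N‖ := by
  obtain ⟨L, hL⟩ := S.conv_Z a b hab
  have hL0 : 0 < ‖L‖ := norm_pos_iff.2 fun hL0 => h (hL0 ▸ hL)
  exact ⟨‖L‖ / 2, by positivity, hL.norm.eventually (eventually_ge_nhds (half_lt_self hL0))⟩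

theorem not_tendsto_scaledZ_of_quadrilateral {i j k l : Fin n}
    (hij : i ≠ j) (hik : i ≠ k) (hil : i ≠ l) (hjk : j ≠ k) (hjl : j ≠ l) (hkl : k ≠ l)
    (sij : ¬Tendsto (S.scaledZ i j) atTop (𝓝 0)) (sik : ¬Tendsto (S.scaledZ i k) atTop (𝓝 0))
    (sil : ¬Tendsto (S.scaledZ i l) atTop (𝓝 0)) (sjk : ¬Tendsto (S.scaledZ j k) atTop (𝓝 0))
    (sjl : ¬Tendsto (S.scaledZ j l) atTop (𝓝 0)) :
    ¬Tendsto (S.scaledZ k l) atTop (𝓝 0) := by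
  intro skl
  obtain ⟨g, hg, hstrokes⟩ := exists_pos_eventually_forall_mem_le
    {(i, j), (i, k), (i, l), (j, k), (j, l)} (u := fun p N => ‖S.scaledZ p.1 p.2 N‖) (by
      simp only [mem_insert, mem_singleton]
      rintro _ (rfl | rfl | rfl | rfl | rfl)
      exacts [S.exists_pos_eventually_le_norm_scaledZ hij sij,
        S.exists_pos_eventually_le_norm_scaledZ hik sik,
        S.exists_pos_eventually_le_norm_scaledZ hil sil,
        S.exists_pos_eventually_le_norm_scaledZ hjk sjk,
        S.exists_pos_eventually_le_norm_scaledZ hjl sjl])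
  set C := 8 * (1 + (1 + 8 * (g ^ 2)⁻¹) ^ 2) * (g ^ 2)⁻¹
  have hsmall : ∀ᶠ N in atTop, C * ‖S.scaledZ k l N‖ ^ 2 < 1 := by
    have : Tendsto (fun N => C * ‖S.scaledZ k l N‖ ^ 2) atTop (𝓝 0) := by
      simpa using (skl.norm.pow 2).const_mul C
    exact this.eventually (gt_mem_nhds one_pos)
  obtain ⟨N, hN, hCN⟩ := (hstrokes.and hsmall).exists
  have hε : 0 < S.eps N ^ 4 := pow_pos (S.eps_pos N) 4
  have hP : mixedProd (S.z N) (S.w N) k l ≤ C * S.eps N ^ 4 :=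
    mixedProd_le_of_quadrilateral hε (S.eps_pow_four_le_mixedProd N hij)
      (S.eps_pow_four_le_mixedProd N hik) (S.eps_pow_four_le_mixedProd N hil)
      (S.mixedProd_le_of_le_norm_scaledZ N hij hg (hN (i, j) (by simp)))
      (S.mixedProd_le_of_le_norm_scaledZ N hik hg (hN (i, k) (by simp)))
      (S.mixedProd_le_of_le_norm_scaledZ N hil hg (hN (i, l) (by simp)))
      (S.mixedProd_le_of_le_norm_scaledZ N hjk hg (hN (j, k) (by simp)))
      (S.mixedProd_le_of_le_norm_scaledZ N hjl hg (hN (j, l) (by simp)))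
  have := calc S.eps N ^ 4 = mixedProd (S.z N) (S.w N) k l * ‖S.scaledZ k l N‖ ^ 2 :=
        (S.mixedProd_mul_norm_scaledZ_sq N hkl).symm
    _ ≤ C * S.eps N ^ 4 * ‖S.scaledZ k l N‖ ^ 2 := by gcongr
    _ = S.eps N ^ 4 * (C * ‖S.scaledZ k l N‖ ^ 2) := by ring
    _ < S.eps N ^ 4 * 1 := by gcongr
  linarith

def swap : SingularSeq n m where
  z := S.w
  w := S.z
  delta := S.delta
  eps := S.eps
  eps_pos := S.eps_pos
  eps_lim := S.eps_lim
  delta_symm := S.delta_symm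
  eq_z := S.eq_w
  eq_w := S.eq_z
  normalize N k l hkl := by linear_combination S.normalize N k l hkl
  maxZ := S.maxW
  maxW := S.maxZ
  conv_z := S.conv_w
  conv_w := S.conv_z
  conv_Z := S.conv_W
  conv_W := S.conv_Z

end SingularSeq

def QuadrilateralClosed {ι : Type*} (M : Matrix ι ι ℕ) : Prop :=
  ∀ a b c d, a ≠ b → a ≠ c → a ≠ d → b ≠ c → b ≠ d → c ≠ d →
    M a b = 1 → M a c = 1 → M a d = 1 → M b c = 1 → M b d = 1 → M c d = 1

theorem QuadrilateralClosed.sum_ne_five {ι : Type*} {M : Matrix ι ι ℕ} (hM : QuadrilateralClosed M)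
    (h01 : ∀ a b, M a b = 0 ∨ M a b = 1) (hsymm : ∀ a b, M a b = M b a) {i j k l : ι}
    (hij : i ≠ j) (hik : i ≠ k) (hil : i ≠ l) (hjk : j ≠ k) (hjl : j ≠ l) (hkl : k ≠ l) :
    M i j + M i k + M i l + M j k + M j l + M k l ≠ 5 := by
  have := hM i j k l hij hik hil hjk hjl hkl
  have := hM i k j l hik hij hil hjk.symm hkl hjl
  have := hM i l j k hil hij hik hjl.symm hkl.symm hjk
  have := hM j k i l hjk hij.symm hjl hik.symm hkl hil
  have := hM j l i k hjl hij.symm hjk hil.symm hkl.symm hik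
  have := hM k l i j hkl hik.symm hjk.symm hil.symm hjl.symm hij
  have := hsymm j i; have := hsymm k i; have := hsymm l i
  have := hsymm k j; have := hsymm l j; have := hsymm l k
  have := h01 i j; have := h01 i k; have := h01 i l
  have := h01 j k; have := h01 j l; have := h01 k l
  omega

namespace IsZWMatrices

variable {n : ℕ} {m : Fin n → ℂ} {S : SingularSeq n m} {A B : Matrix (Fin n) (Fin n) ℕ}

theorem swap (hAB : IsZWMatrices S A B) : IsZWMatrices S.swap B A :=
  ⟨hAB.zeroOne_B, hAB.symm_B, hAB.zeroOne_A, hAB.symm_A,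
    hAB.diag_B, hAB.off_B, hAB.diag_A, hAB.off_A⟩

theorem quadrilateralClosed_A (hAB : IsZWMatrices S A B) : QuadrilateralClosed A :=
  fun a b c d hab hac had hbc hbd hcd eab eac ead ebc ebd =>
    (hAB.off_A c d hcd).2 <| S.not_tendsto_scaledZ_of_quadrilateral hab hac had hbc hbd hcd
      ((hAB.off_A a b hab).1 eab) ((hAB.off_A a c hac).1 eac) ((hAB.off_A a d had).1 ead)
      ((hAB.off_A b c hbc).1 ebc) ((hAB.off_A b d hbd).1 ebd)

theorem quadrilateralClosed_B (hAB : IsZWMatrices S A B) : QuadrilateralClosed B :=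
  hAB.swap.quadrilateralClosed_A

end IsZWMatrices

theorem first_rule_of_quadrilaterals_general (n : ℕ) (m : Fin n → ℂ)
    (S : SingularSeq n m) (A B : Matrix (Fin n) (Fin n) ℕ)
    (hAB : IsZWMatrices S A B) :
    ∀ i j k l : Fin n, i ≠ j → i ≠ k → i ≠ l → j ≠ k → j ≠ l → k ≠ l →
      A i j + A i k + A i l + A j k + A j l + A k l ≠ 5 ∧
      B i j + B i k + B i l + B j k + B j l + B k l ≠ 5 :=
  fun _ _ _ _ hij hik hil hjk hjl hkl =>
    ⟨hAB.quadrilateralClosed_A.sum_ne_five hAB.zeroOne_A hAB.symm_A hij hik hil hjk hjl hkl,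
      hAB.quadrilateralClosed_B.sum_ne_five hAB.zeroOne_B hAB.symm_B hij hik hil hjk hjl hkl⟩

theorem first_rule_of_quadrilaterals (n : ℕ) (hn : 4 ≤ n) (m : Fin n → ℂ)
    (hm : ∀ I : Finset (Fin n), I.Nonempty → ∑ k ∈ I, m k ≠ 0)
    (S : SingularSeq n m) (A B : Matrix (Fin n) (Fin n) ℕ)
    (hAB : IsZWMatrices S A B) :
    ∀ i j k l : Fin n, i ≠ j → i ≠ k → i ≠ l → j ≠ k → j ≠ l → k ≠ l →
      A i j + A i k + A i l + A j k + A j l + A k l ≠ 5 ∧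
      B i j + B i k + B i l + B j k + B j l + B k l ≠ 5 :=
  first_rule_of_quadrilaterals_general n m S A B hAB
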